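/- arXiv:2209.10313 — 5 statements merged into one kernel-verified Lean document; each statement's English description precedes it below -/
import Mathlib

section
/- For acceptors A₁ and A₂, the concatenation A₁ ∘ A₂ (obtained by appending the sequence A₂ after A₁) satisfies L(A₁ ∘ A₂) = { w₁w₂ | w₁ ∈ L(A₁) and w₂ ∈ L(A₂) }. -/
/-- A border function on a well-ordered alphabet, viewed as a finite set of ordered pairs
(a functional finite graph) that is defined at least for the minimal symbol `⊥`. -/
structure BorderFun (α : Type*) [LinearOrder α] [OrderBot α] (D : Type*) where
  graph : Finset (α × D)
  functional : ∀ p ∈ graph, ∀ q ∈ graph, p.1 = q.1 → p.2 = q.2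
  bot_mem : ∃ d, (⊥, d) ∈ graph

namespace BorderFun
open Classical

variable {α : Type*} [LinearOrder α] [OrderBot α] {D D' D₁ D₂ : Type*}

/-- The domain of a border function. -/
def dom (φ : BorderFun α D) : Finset α := φ.graph.image Prod.fst

lemma filter_nonempty (φ : BorderFun α D) (σ : α) :
    (φ.dom.filter (fun τ => τ ≤ σ)).Nonempty := by
  obtain ⟨d, hd⟩ := φ.bot_mem
  exact ⟨⊥, Finset.mem_filter.mpr ⟨Finset.mem_image.mpr ⟨(⊥, d), hd, rfl⟩, bot_le⟩⟩

/-- `σ^≤`: the greatest element of the domain that is `≤ σ`. -/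
def maxLe (φ : BorderFun α D) (σ : α) : α :=
  (φ.dom.filter (fun τ => τ ≤ σ)).max' (φ.filter_nonempty σ)

lemma exists_leVal (φ : BorderFun α D) (σ : α) : ∃ d, (φ.maxLe σ, d) ∈ φ.graph := by
  have h := Finset.max'_mem _ (φ.filter_nonempty σ)
  have h2 := (Finset.mem_filter.mp h).1
  obtain ⟨p, hp, hfst⟩ := Finset.mem_image.mp h2
  exact ⟨p.2, by rw [show φ.maxLe σ = p.1 from hfst.symm]; exact hp⟩

/-- `φ^≤(σ)`: the value of `φ` at the greatest domain element `≤ σ`. -/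
noncomputable def leVal (φ : BorderFun α D) (σ : α) : D :=
  Classical.choose (φ.exists_leVal σ)

/-- Two border functions are equivalent if they induce the same total function `φ^≤`. -/
def Equiv (φ ψ : BorderFun α D) : Prop := ∀ σ, φ.leVal σ = ψ.leVal σ

/-- The minimization of a border function: remove every border whose immediate
predecessor border carries the same value. -/
noncomputable def minimize (φ : BorderFun α D) : BorderFun α D where
  graph := φ.graph.filter (fun p => ∀ q ∈ φ.graph, q.1 < p.1 →
    (∀ r ∈ φ.graph, ¬(q.1 < r.1 ∧ r.1 < p.1)) → q.2 ≠ p.2)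
  functional := fun p hp q hq =>
    φ.functional p (Finset.mem_of_mem_filter p hp) q (Finset.mem_of_mem_filter q hq)
  bot_mem := by
    obtain ⟨d, hd⟩ := φ.bot_mem
    exact ⟨d, Finset.mem_filter.mpr ⟨hd, fun q hq hlt => absurd hlt (not_lt_bot)⟩⟩

/-- Pointwise application of a function to the values of a border function (without minimization). -/
noncomputable def map (f : D → D') (φ : BorderFun α D) : BorderFun α D' where
  graph := φ.graph.image (fun p => (p.1, f p.2))
  functional := by
    intro p hp q hq h
    obtain ⟨a, ha, rfl⟩ := Finset.mem_image.mp hp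
    obtain ⟨b, hb, rfl⟩ := Finset.mem_image.mp hq
    simp only at h ⊢
    rw [φ.functional a ha b hb h]
  bot_mem := by
    obtain ⟨d, hd⟩ := φ.bot_mem
    exact ⟨f d, Finset.mem_image.mpr ⟨(⊥, d), hd, rfl⟩⟩

/-- The application of `f` on `φ`: the minimization of the pointwise image. -/
noncomputable def appF (f : D → D') (φ : BorderFun α D) : BorderFun α D' :=
  (φ.map f).minimize

/-- The product of two border functions. -/
noncomputable def prod (φ₁ : BorderFun α D₁) (φ₂ : BorderFun α D₂) :
    BorderFun α (D₁ × D₂) where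
  graph := (φ₁.dom ∪ φ₂.dom).image (fun σ => (σ, (φ₁.leVal σ, φ₂.leVal σ)))
  functional := by
    intro p hp q hq h
    obtain ⟨a, ha, rfl⟩ := Finset.mem_image.mp hp
    obtain ⟨b, hb, rfl⟩ := Finset.mem_image.mp hq
    simp only at h ⊢
    subst h
    rfl
  bot_mem := by
    obtain ⟨d, hd⟩ := φ₁.bot_mem
    exact ⟨_, Finset.mem_image.mpr ⟨⊥,
      Finset.mem_union_left _ (Finset.mem_image.mpr ⟨(⊥, d), hd, rfl⟩), rfl⟩⟩

/-- The constant border function with the single border `(⊥, d)`. -/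
def botFun (d : D) : BorderFun α D :=
  ⟨{(⊥, d)}, by
    intro p hp q hq _
    simp only [Finset.mem_singleton] at hp hq
    rw [hp, hq], ⟨d, by simp⟩⟩

end BorderFun

/-- An acceptor: a flat list of states, each consisting of a set of relative
ε-transitions and a border function giving relative symbol transitions
(`none` = `#`, no transition). State `i` (1-indexed) is `states[i-1]`;
the initial state is `1` and the accepting state is `length + 1`. -/
abbrev Acceptor (α : Type*) [LinearOrder α] [OrderBot α] :=
  List (Finset ℤ × BorderFun α (Option ℤ))

namespace Acceptor

variable {α : Type*} [LinearOrder α] [OrderBot α]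

/-- The committing condition: no transitions to states `< 2` or `> n + 1`. -/
def Valid (M : Acceptor α) : Prop :=
  ∀ i (hi : i < M.length),
    (∀ j ∈ (M.get ⟨i, hi⟩).1,
        2 ≤ (i + 1 : ℤ) + j ∧ (i + 1 : ℤ) + j ≤ (M.length : ℤ) + 1) ∧
    (∀ p ∈ (M.get ⟨i, hi⟩).2.graph, ∀ j : ℤ, p.2 = some j →
        2 ≤ (i + 1 : ℤ) + j ∧ (i + 1 : ℤ) + j ≤ (M.length : ℤ) + 1)

/-- The transition relation on configurations `(state, word read so far)`. -/
inductive Step (M : Acceptor α) : ℤ × List α → ℤ × List α → Prop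
  | eps {i : ℕ} (hi : i < M.length) {j : ℤ} (hj : j ∈ (M.get ⟨i, hi⟩).1) (w : List α) :
      Step M ((i : ℤ) + 1, w) ((i : ℤ) + 1 + j, w)
  | symb {i : ℕ} (hi : i < M.length) {σ : α} {j : ℤ}
      (hj : (M.get ⟨i, hi⟩).2.leVal σ = some j) (w : List α) :
      Step M ((i : ℤ) + 1, w) ((i : ℤ) + 1 + j, w ++ [σ])

/-- `M` accepts `w` iff `(1, ε) ⊢* (‖M‖ + 1, w)`. -/
def Accepts (M : Acceptor α) (w : List α) : Prop :=
  Relation.ReflTransGen (Step M) (1, []) ((M.length : ℤ) + 1, w)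

/-- The language of an acceptor. -/
def Lang (M : Acceptor α) : Set (List α) := {w | M.Accepts w}

/-- The acceptor `A_ε`, which is the empty sequence. -/
def epsA : Acceptor α := []

/-- The one-state acceptor `A_∅` accepting nothing. -/
def emptyA : Acceptor α := [(∅, BorderFun.botFun none)]

/-- `M{i →^ε j}`: add the relative ε-transition `j - i` to state `i`. -/
def addEps (M : Acceptor α) (i j : ℤ) : Acceptor α :=
  M.modify (i - 1).toNat (fun p => (insert (j - i) p.1, p.2))

/-- The union `M₁ | M₂ := (M₁ ∘ A_∅ ∘ M₂){1 →^ε ‖M₁‖+2, ‖M₁‖+1 →^ε ‖M₁‖+‖M₂‖+2}`. -/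
def union (M₁ M₂ : Acceptor α) : Acceptor α :=
  addEps (addEps (M₁ ++ emptyA ++ M₂) 1 ((M₁.length : ℤ) + 2))
    ((M₁.length : ℤ) + 1) ((M₁.length : ℤ) + (M₂.length : ℤ) + 2)

/-- The Kleene star
`M* := (A_∅ ∘ M ∘ A_∅){1 →^ε 2, 2 →^ε ‖M‖+3, ‖M‖+2 →^ε 2}`. -/
def star (M : Acceptor α) : Acceptor α :=
  addEps (addEps (addEps (emptyA ++ M ++ emptyA) 1 2) 2 ((M.length : ℤ) + 3))
    ((M.length : ℤ) + 2) 2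

/-- The non-empty repetition
`M⁺ := (A_∅ ∘ M ∘ A_∅){1 →^ε 2, ‖M‖+2 →^ε 2, ‖M‖+2 →^ε ‖M‖+3}`. -/
def plus (M : Acceptor α) : Acceptor α :=
  addEps (addEps (addEps (emptyA ++ M ++ emptyA) 1 2) ((M.length : ℤ) + 2) 2)
    ((M.length : ℤ) + 2) ((M.length : ℤ) + 3)

/-- The optional acceptor `M? := M{1 →^ε ‖M‖+1}`. -/
def opt (M : Acceptor α) : Acceptor α := addEps M 1 ((M.length : ℤ) + 1)

end Acceptor

/-! Since `M₁` never jumps beyond its final state `‖M₁‖ + 1` and `M₂` never jumps back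
below its own state `2`, a run of `M₁ ∘ M₂` is a run of `M₁` until it first reaches
state `‖M₁‖ + 1`, which is the initial state of the shifted copy of `M₂`, and from
there on it is a shifted run of `M₂`. -/

lemma BorderFun.maxLe_leVal_mem_graph {α D : Type*} [LinearOrder α] [OrderBot α]
    (φ : BorderFun α D) (σ : α) : (φ.maxLe σ, φ.leVal σ) ∈ φ.graph :=
  Classical.choose_spec (φ.exists_leVal σ)

namespace Acceptor

open Relation

variable {α : Type*} [LinearOrder α] [OrderBot α] {M M₁ M₂ : Acceptor α}
  {c c' : ℤ × List α}

lemma Valid.step_target (hM : Valid M) (h : Step M c c') :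
    2 ≤ c'.1 ∧ c'.1 ≤ M.length + 1 := by
  cases h with
  | eps hi hj => exact (hM _ hi).1 _ hj
  | symb hi hj => exact (hM _ hi).2 _ (BorderFun.maxLe_leVal_mem_graph _ _) _ hj

lemma Valid.one_le_of_reflTransGen (hM : Valid M) {u : List α}
    (h : ReflTransGen (Step M) (1, u) c) : 1 ≤ c.1 := by
  rcases h.cases_tail with rfl | ⟨_, -, hs⟩
  · exact le_rfl
  · linarith [(hM.step_target hs).1]

lemma Step.append_left (h : Step M₁ c c') : Step (M₁ ++ M₂) c c' := by
  cases h with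
  | eps hi hj w =>
    refine Step.eps (List.length_append ▸ Nat.lt_add_right _ hi) ?_ w
    simpa [List.getElem_append_left hi] using hj
  | symb hi hj w =>
    refine Step.symb (List.length_append ▸ Nat.lt_add_right _ hi) ?_ w
    simpa [List.getElem_append_left hi] using hj

lemma Step.of_append_left (h : Step (M₁ ++ M₂) c c') (hc : c.1 ≤ M₁.length) :
    Step M₁ c c' := by
  cases h with
  | @eps i _ _ hj w =>
    have hi : i < M₁.length := by simp only at hc; omega
    exact Step.eps hi (by simpa [List.getElem_append_left hi] using hj) w
  | @symb i _ _ _ hj w =>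
    have hi : i < M₁.length := by simp only at hc; omega
    exact Step.symb hi (by simpa [List.getElem_append_left hi] using hj) w

lemma Step.append_right (u : List α) (h : Step M₂ c c') :
    Step (M₁ ++ M₂) (M₁.length + c.1, u ++ c.2) (M₁.length + c'.1, u ++ c'.2) := by
  cases h with
  | @eps i hi j hj w =>
    have hi' : M₁.length + i < (M₁ ++ M₂).length := by simp [hi]
    have := Step.eps hi' (j := j) (by simpa [List.getElem_append_right] using hj) (u ++ w)
    convert this using 2 <;> push_cast <;> ring
  | @symb i hi σ j hj w =>
    have hi' : M₁.length + i < (M₁ ++ M₂).length := by simp [hi]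
    have := Step.symb hi' (j := j) (by simpa [List.getElem_append_right] using hj) (u ++ w)
    convert this using 2
    · push_cast; ring
    · push_cast; ring
    · exact (List.append_assoc u w [σ]).symm

lemma Step.of_append_right {u w : List α} (h : Step (M₁ ++ M₂) c c')
    (hc : M₁.length < c.1) (hw : c.2 = u ++ w) :
    ∃ w', c'.2 = u ++ w' ∧ Step M₂ (c.1 - M₁.length, w) (c'.1 - M₁.length, w') := by
  cases h with
  | @eps i hi j hj _ =>
    obtain ⟨k, rfl⟩ : ∃ k, i = M₁.length + k := ⟨i - M₁.length, by simp only at hc; omega⟩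
    have hk : k < M₂.length := by simpa using hi
    have := Step.eps hk (j := j) (by simpa [List.getElem_append_right] using hj) w
    exact ⟨w, hw, by convert this using 2 <;> push_cast <;> ring⟩
  | @symb i hi σ j hj _ =>
    obtain ⟨k, rfl⟩ : ∃ k, i = M₁.length + k := ⟨i - M₁.length, by simp only at hc; omega⟩
    have hk : k < M₂.length := by simpa using hi
    have := Step.symb hk (j := j) (by simpa [List.getElem_append_right] using hj) w
    refine ⟨w ++ [σ], by simp only at hw; simp [hw], ?_⟩
    convert this using 2 <;> push_cast <;> ring

lemma reflTransGen_append_left (h : ReflTransGen (Step M₁) c c') :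
    ReflTransGen (Step (M₁ ++ M₂)) c c' :=
  ReflTransGen.mono (fun _ _ hs => Step.append_left hs) _ _ h

lemma reflTransGen_append_right (u : List α) (h : ReflTransGen (Step M₂) c c') :
    ReflTransGen (Step (M₁ ++ M₂)) (M₁.length + c.1, u ++ c.2)
      (M₁.length + c'.1, u ++ c'.2) :=
  h.lift (fun c => ((M₁.length : ℤ) + c.1, u ++ c.2)) fun _ _ => Step.append_right u

lemma Valid.reflTransGen_append_cases (h₁ : Valid M₁)
    (h : ReflTransGen (Step (M₁ ++ M₂)) (1, []) c) :
    (c.1 ≤ M₁.length ∧ ReflTransGen (Step M₁) (1, []) c) ∨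
      ∃ w, M₁.Accepts w ∧ ReflTransGen (Step (M₁ ++ M₂)) (M₁.length + 1, w) c := by
  induction h with
  | refl =>
    rcases Nat.eq_zero_or_pos M₁.length with h0 | h0
    · exact Or.inr ⟨[], by simpa [Accepts, h0] using .refl, by simpa [h0] using .refl⟩
    · exact Or.inl ⟨by simp only; omega, .refl⟩
  | @tail _ c' _ hs ih =>
    rcases ih with ⟨hc, hrun⟩ | ⟨w, hw, hrun⟩
    · have hs₁ := hs.of_append_left hc
      rcases (h₁.step_target hs₁).2.lt_or_eq with hlt | heq
      · exact Or.inl ⟨by omega, hrun.tail hs₁⟩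
      · refine Or.inr ⟨c'.2, ?_, ?_⟩
        · simpa [Accepts, ← heq] using hrun.tail hs₁
        · simpa [← heq] using ReflTransGen.refl
    · exact Or.inr ⟨w, hw, hrun.tail hs⟩

lemma Valid.reflTransGen_of_append_right (h₂ : Valid M₂) {u : List α}
    (h : ReflTransGen (Step (M₁ ++ M₂)) (M₁.length + 1, u) c) :
    ∃ w, c.2 = u ++ w ∧ ReflTransGen (Step M₂) (1, []) (c.1 - M₁.length, w) := by
  induction h with
  | refl => exact ⟨[], by simp, by simpa using .refl⟩
  | tail _ hs ih =>
    obtain ⟨w, hw, hrun⟩ := ih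
    have hc := h₂.one_le_of_reflTransGen hrun
    obtain ⟨w', hw', hs'⟩ := hs.of_append_right (by simp only at hc; omega) hw
    exact ⟨w', hw', hrun.tail hs'⟩

lemma Accepts.append {w₁ w₂ : List α} (hw₁ : M₁.Accepts w₁) (hw₂ : M₂.Accepts w₂) :
    (M₁ ++ M₂).Accepts (w₁ ++ w₂) := by
  have hrun₂ := reflTransGen_append_right (M₁ := M₁) w₁ hw₂
  simp only [List.append_nil] at hrun₂
  unfold Accepts
  convert (reflTransGen_append_left hw₁).trans hrun₂ using 2
  simp only [List.length_append, Nat.cast_add]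
  ring

lemma Accepts.exists_split (h₁ : Valid M₁) (h₂ : Valid M₂) {w : List α}
    (hw : (M₁ ++ M₂).Accepts w) :
    ∃ w₁ w₂, M₁.Accepts w₁ ∧ M₂.Accepts w₂ ∧ w = w₁ ++ w₂ := by
  rcases h₁.reflTransGen_append_cases hw with ⟨hle, -⟩ | ⟨w₁, hw₁, hrun⟩
  · simp only [List.length_append, Nat.cast_add] at hle
    omega
  · obtain ⟨w₂, rfl, hw₂⟩ := h₂.reflTransGen_of_append_right hrun
    refine ⟨w₁, w₂, hw₁, ?_, rfl⟩
    unfold Accepts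
    convert hw₂ using 3
    simp only [List.length_append, Nat.cast_add]
    ring

end Acceptor

/-- The concatenation of two (committing) acceptors accepts exactly
the concatenations of their words: `L(A₁ ∘ A₂) = { w₁w₂ | w₁ ∈ L(A₁), w₂ ∈ L(A₂) }`. -/
theorem concat_lang {α : Type*} [LinearOrder α] [OrderBot α]
    (M₁ M₂ : Acceptor α) (h₁ : Acceptor.Valid M₁) (h₂ : Acceptor.Valid M₂) :
    Acceptor.Lang (M₁ ++ M₂) =
      {w : List α | ∃ w₁ ∈ Acceptor.Lang M₁, ∃ w₂ ∈ Acceptor.Lang M₂, w = w₁ ++ w₂} := by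
  ext w
  constructor
  · intro hw
    obtain ⟨w₁, w₂, hw₁, hw₂, rfl⟩ := Acceptor.Accepts.exists_split h₁ h₂ hw
    exact ⟨w₁, hw₁, w₂, hw₂, rfl⟩
  · rintro ⟨w₁, hw₁, w₂, hw₂, rfl⟩
    exact Acceptor.Accepts.append hw₁ hw₂
end

section
/- In any run (1,ε) ⊢* (n₁+n₂+1, w) of the concatenation A₁ ∘ A₂ (where n₁ = ‖A₁‖, n₂ = ‖A₂‖), the first configuration (n', w') with n' > n₁ satisfies n' = n₁ + 1. -/
namespace BorderFun

variable {α : Type*} [LinearOrder α] [OrderBot α] {D : Type*}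

lemma maxLe_leVal_mem_graph_s11 (φ : BorderFun α D) (σ : α) : (φ.maxLe σ, φ.leVal σ) ∈ φ.graph :=
  Classical.choose_spec (φ.exists_leVal σ)

end BorderFun

namespace Acceptor

variable {α : Type*} [LinearOrder α] [OrderBot α]

theorem Valid.step_target_mem_Icc {M : Acceptor α} (hM : M.Valid) {c c' : ℤ × List α}
    (hstep : Step M c c') : c'.1 ∈ Set.Icc 2 ((M.length : ℤ) + 1) := by
  cases hstep with
  | eps hi hj => exact (hM _ hi).1 _ hj
  | symb hi hj => exact (hM _ hi).2 _ (BorderFun.maxLe_leVal_mem_graph_s11 _ _) _ hj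

theorem Step.of_append_left_s11 {M₁ M₂ : Acceptor α} {m : ℤ} {v : List α} {c : ℤ × List α}
    (hstep : Step (M₁ ++ M₂) (m, v) c) (hm : m ≤ (M₁.length : ℤ)) : Step M₁ (m, v) c := by
  cases hstep with
  | @eps i hi _ hj =>
    have hi₁ : i < M₁.length := by omega
    rw [List.get_eq_getElem, List.getElem_append_left hi₁] at hj
    exact .eps hi₁ hj v
  | @symb i hi _ _ hj =>
    have hi₁ : i < M₁.length := by omega
    rw [List.get_eq_getElem, List.getElem_append_left hi₁] at hj
    exact .symb hi₁ hj v

end Acceptor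

theorem concat_first_crossing_general {α : Type*} [LinearOrder α] [OrderBot α]
    (M₁ M₂ : Acceptor α) (h₁ : Acceptor.Valid M₁)
    (v w' : List α) (m n' : ℤ)
    (hstep : Acceptor.Step (M₁ ++ M₂) (m, v) (n', w'))
    (hm : m ≤ (M₁.length : ℤ)) (hn : (M₁.length : ℤ) < n') :
    n' = (M₁.length : ℤ) + 1 := by
  have hle : n' ≤ (M₁.length : ℤ) + 1 :=
    (h₁.step_target_mem_Icc (hstep.of_append_left_s11 hm)).2
  omega

/-- In any run `(1, ε) ⊢* (n₁+n₂+1, w)` of the concatenation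
`A₁ ∘ A₂` (with `n₁ = ‖A₁‖`, `n₂ = ‖A₂‖`), the first configuration `(n', w')`
with `n' > n₁` satisfies `n' = n₁ + 1`. -/
theorem concat_first_crossing {α : Type*} [LinearOrder α] [OrderBot α]
    (M₁ M₂ : Acceptor α) (h₁ : Acceptor.Valid M₁) (h₂ : Acceptor.Valid M₂)
    (w v w' : List α) (m n' : ℤ)
    (hstart : Relation.ReflTransGen (Acceptor.Step (M₁ ++ M₂)) (1, []) (m, v))
    (hstep : Acceptor.Step (M₁ ++ M₂) (m, v) (n', w'))
    (hrest : Relation.ReflTransGen (Acceptor.Step (M₁ ++ M₂)) (n', w')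
      ((M₁.length : ℤ) + (M₂.length : ℤ) + 1, w))
    (hm : m ≤ (M₁.length : ℤ)) (hn : (M₁.length : ℤ) < n') :
    n' = (M₁.length : ℤ) + 1 :=
  concat_first_crossing_general M₁ M₂ h₁ v w' m n' hstep hm hn
end

section
/- For every committing acceptor A, the optional acceptor A? := A{1 →^ε ‖A‖+1} satisfies L(A?) = L(A) ∪ {ε}. -/
/-!
A step of `A?` is either a step of `A` or the new ε-transition from state `1` to the accepting
state `‖A‖ + 1`. Since `A` is committing, no step of `A` enters state `1`, so a run of `A?` can
take the new transition only as its first step; it then sits in the accepting state, which has no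
outgoing transitions, and has read `ε`. Every other run of `A?` is a run of `A`.
-/

namespace Acceptor

variable {α : Type*} [LinearOrder α] [OrderBot α]

@[simp]
lemma length_addEps (M : Acceptor α) (i j : ℤ) : (M.addEps i j).length = M.length :=
  List.length_modify ..

lemma getElem_addEps (M : Acceptor α) (i j : ℤ) {k : ℕ} (hk : k < M.length) :
    (M.addEps i j)[k]'(by simpa using hk) =
      if (i - 1).toNat = k then (insert (j - i) M[k].1, M[k].2) else M[k] :=
  List.getElem_modify ..

lemma Step.addEps {M : Acceptor α} {c d : ℤ × List α} (hs : Step M c d) (i j : ℤ) :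
    Step (M.addEps i j) c d := by
  cases hs with
  | eps hk hj w =>
    refine .eps (by simpa using hk) ?_ w
    rw [List.get_eq_getElem, getElem_addEps _ _ _ hk]
    split_ifs
    · exact Finset.mem_insert_of_mem hj
    · exact hj
  | symb hk hj w =>
    refine .symb (by simpa using hk) ?_ w
    rw [List.get_eq_getElem, getElem_addEps _ _ _ hk]
    split_ifs <;> exact hj

lemma step_addEps_self (M : Acceptor α) {i : ℤ} (hi₁ : 1 ≤ i) (hi₂ : i ≤ M.length) (j : ℤ)
    (w : List α) : Step (M.addEps i j) (i, w) (j, w) := by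
  obtain ⟨k, rfl⟩ : ∃ k : ℕ, i = k + 1 := ⟨(i - 1).toNat, by omega⟩
  have hk : k < M.length := by omega
  have hj : j - (k + 1) ∈ ((M.addEps (k + 1) j).get ⟨k, by simpa using hk⟩).1 := by
    simp [List.get_eq_getElem, getElem_addEps _ _ _ hk]
  simpa using Step.eps _ hj w

lemma step_addEps_iff {M : Acceptor α} {i j : ℤ} (hi : 1 ≤ i) {c d : ℤ × List α} :
    Step (M.addEps i j) c d ↔ Step M c d ∨ (c.1 = i ∧ i ≤ M.length ∧ d = (j, c.2)) := by
  refine ⟨fun hs => ?_, ?_⟩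
  · cases hs with
    | eps hk hj w =>
      rename_i k j'
      have hk' : k < M.length := by simpa using hk
      rw [List.get_eq_getElem, getElem_addEps _ _ _ hk'] at hj
      split_ifs at hj with hki
      · rcases Finset.mem_insert.1 hj with rfl | hj
        · right
          refine ⟨by omega, by omega, ?_⟩
          ext <;> simp
          omega
        · exact .inl (.eps hk' hj w)
      · exact .inl (.eps hk' hj w)
    | symb hk hj w =>
      rename_i k σ j'
      have hk' : k < M.length := by simpa using hk
      rw [List.get_eq_getElem, getElem_addEps _ _ _ hk'] at hj
      left
      refine .symb hk' ?_ w
      split_ifs at hj <;> exact hj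
  · rintro (hs | ⟨hc, hi', hd⟩)
    · exact hs.addEps i j
    · obtain ⟨c₁, w⟩ := c
      simp only at hc hd
      subst hc hd
      exact step_addEps_self M hi hi' j w

lemma Step.fst_le_length {M : Acceptor α} {c d : ℤ × List α} (hs : Step M c d) :
    c.1 ≤ M.length := by
  cases hs <;> simp <;> omega

lemma eq_of_reflTransGen_of_fst_eq_length_add_one {M : Acceptor α} {c d : ℤ × List α}
    (hr : Relation.ReflTransGen (Step M) c d) (hc : c.1 = M.length + 1) : d = c := by
  rcases hr.cases_head with rfl | ⟨e, hs, -⟩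
  · rfl
  · have := hs.fst_le_length
    omega

lemma Valid.two_le_of_step {M : Acceptor α} (h : M.Valid) {c d : ℤ × List α}
    (hs : Step M c d) : 2 ≤ d.1 := by
  cases hs with
  | eps hk hj w => exact ((h _ hk).1 _ hj).1
  | symb hk hj w =>
    rename_i k σ j
    have hmem := Classical.choose_spec ((M.get ⟨k, hk⟩).2.exists_leVal σ)
    rw [← BorderFun.leVal, hj] at hmem
    exact ((h _ hk).2 _ hmem j rfl).1

lemma reflTransGen_of_reflTransGen_addEps {M : Acceptor α} {i j : ℤ} (hi : 1 ≤ i)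
    (hM : ∀ c d, Step M c d → d.1 ≠ i) {c d : ℤ × List α}
    (hr : Relation.ReflTransGen (Step (M.addEps i j)) c d) (hc : c.1 ≠ i) :
    Relation.ReflTransGen (Step M) c d := by
  induction hr using Relation.ReflTransGen.head_induction_on with
  | refl => rfl
  | head hs _ ih =>
    rcases (step_addEps_iff hi).1 hs with hs | ⟨hc', -⟩
    · exact .head hs (ih (hM _ _ hs))
    · exact absurd hc' hc

end Acceptor

/-- For every committing acceptor `A`, the optional acceptor
`A? := A{1 →^ε ‖A‖+1}` satisfies `L(A?) = L(A) ∪ {ε}`. -/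
theorem opt_lang {α : Type*} [LinearOrder α] [OrderBot α]
    (M : Acceptor α) (h : Acceptor.Valid M) :
    Acceptor.Lang (Acceptor.opt M) = Acceptor.Lang M ∪ {([] : List α)} := by
  have never_enters_one : ∀ c d, Acceptor.Step M c d → d.1 ≠ 1 := fun _ _ hs => by
    have := h.two_le_of_step hs
    omega
  ext w
  simp only [Acceptor.Lang, Acceptor.Accepts, Acceptor.opt, Acceptor.length_addEps,
    Set.mem_union, Set.mem_ofPred_eq, Set.mem_singleton_iff]
  constructor
  · intro hw
    rcases hw.cases_head with heq | ⟨c, hc, hrest⟩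
    · exact .inr (Prod.ext_iff.1 heq).2.symm
    · rcases (Acceptor.step_addEps_iff le_rfl).1 hc with hs | ⟨-, -, rfl⟩
      · exact .inl (.head hs (Acceptor.reflTransGen_of_reflTransGen_addEps le_rfl
          never_enters_one hrest (never_enters_one _ _ hs)))
      · have := Acceptor.eq_of_reflTransGen_of_fst_eq_length_add_one hrest (by simp)
        exact .inr (Prod.ext_iff.1 this).2
  · rintro (hw | rfl)
    · exact Relation.ReflTransGen.mono (fun _ _ hs => hs.addEps 1 _) _ _ hw
    · rcases M.length.eq_zero_or_pos with h0 | hpos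
      · simpa [h0] using Relation.ReflTransGen.refl
      · exact .single (Acceptor.step_addEps_self M le_rfl (by omega) _ [])
end

section
/- Let C be a well-formed nondeterministic classifier and C_det the deterministic classifier obtained from C by the subset-construction determinization procedure using ε-closures, borders, and CLASS. Then for every word w ∈ Σ*, if C classifies w as (w', t') and C_det classifies w as (w'', t''), then w' = w'' and t' = t''. -/
/-- A classifier: a flat list of states, each with relative ε-transitions,
a border function giving relative symbol transitions (`none` = `#`), and a
token class. State `1` carries the error class `t₁`. -/
abbrev Classifier (α : Type*) [LinearOrder α] [OrderBot α] (T : Type*) :=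
  List (Finset ℤ × BorderFun α (Option ℤ) × T)

namespace Classifier

variable {α : Type*} [LinearOrder α] [OrderBot α] {T : Type*}

/-- `TokOf C i t`: state `i` (1-indexed) exists and carries token `t`. -/
def TokOf (C : Classifier α T) (i : ℤ) (t : T) : Prop :=
  ∃ h : (i - 1).toNat < C.length, 1 ≤ i ∧ (C.get ⟨(i - 1).toNat, h⟩).2.2 = t

/-- An ε-transition from state `a` to state `b`. -/
def EpsStep (C : Classifier α T) (a b : ℤ) : Prop :=
  ∃ h : (a - 1).toNat < C.length, 1 ≤ a ∧ b - a ∈ (C.get ⟨(a - 1).toNat, h⟩).1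

/-- A symbol transition on `σ` from state `a` to state `b`. -/
def SymStep (C : Classifier α T) (σ : α) (a b : ℤ) : Prop :=
  ∃ h : (a - 1).toNat < C.length,
    1 ≤ a ∧ (C.get ⟨(a - 1).toNat, h⟩).2.1.leVal σ = some (b - a)

/-- The transition relation on configurations `(state, word read so far)`. -/
def Step (C : Classifier α T) : ℤ × List α → ℤ × List α → Prop := fun p q =>
  (EpsStep C p.1 q.1 ∧ q.2 = p.2) ∨ (∃ σ, SymStep C σ p.1 q.1 ∧ q.2 = p.2 ++ [σ])

/-- `Reach C i w`: `(1, ε) ⊢* (i, w)`. -/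
def Reach (C : Classifier α T) (i : ℤ) (w : List α) : Prop :=
  Relation.ReflTransGen (Step C) (1, []) (i, w)

/-- A classifier is well-formed if no state reachable on the empty word carries a
token different from the error class `t₁`. -/
def WellFormed (C : Classifier α T) : Prop :=
  ∀ i t t₁, Reach C i [] → TokOf C i t → TokOf C 1 t₁ → t = t₁

/-- `ClassifiesAs C w w' t`: the classification of `w` by `C` is the pair `(w', t)`:
either no prefix of `w` reaches a non-error state, and then `w' = ε` and `t = t₁`;
or `w'` is the maximal prefix of `w` reaching a state with non-error token, and `t`
is the token of the largest such state. -/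
def ClassifiesAs (C : Classifier α T) (w w' : List α) (t : T) : Prop :=
  (w' = [] ∧ TokOf C 1 t ∧
    ∀ p i ti t1, p <+: w → Reach C i p → TokOf C i ti → TokOf C 1 t1 → ti = t1) ∨
  (w' <+: w ∧ ∃ i t1, TokOf C 1 t1 ∧ Reach C i w' ∧ TokOf C i t ∧ t ≠ t1 ∧
    (∀ j tj, Reach C j w' → TokOf C j tj → tj ≠ t1 → j ≤ i) ∧
    (∀ p j tj t1', p <+: w → w'.length < p.length →
      Reach C j p → TokOf C j tj → TokOf C 1 t1' → tj = t1'))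

/-- The ε-closure of a set of states. -/
def Clos (C : Classifier α T) (S : Set ℤ) : Set ℤ :=
  {j | ∃ i ∈ S, Relation.ReflTransGen (EpsStep C) i j}

/-- `ClassOf C S t`: `t = CLASS(S)`, i.e. `t = t₁` if every state of `S` carries the
error token, and otherwise `t` is the token of the maximal state of `S` whose token
differs from `t₁`. -/
def ClassOf (C : Classifier α T) (S : Set ℤ) (t : T) : Prop :=
  ((∀ i ∈ S, ∀ ti t1, TokOf C i ti → TokOf C 1 t1 → ti = t1) ∧ TokOf C 1 t) ∨
  (∃ i ∈ S, TokOf C i t ∧ (∀ t1, TokOf C 1 t1 → t ≠ t1) ∧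
    ∀ j ∈ S, ∀ tj t1, TokOf C j tj → TokOf C 1 t1 → tj ≠ t1 → j ≤ i)

/-- The set of successor states of `S` on symbol `σ`. -/
def NextSet (C : Classifier α T) (S : Set ℤ) (σ : α) : Set ℤ :=
  {b | ∃ a ∈ S, SymStep C σ a b}

/-- `IsDeterminization C Cd S`: `Cd` is the deterministic classifier produced from `C`
by the subset construction, where `S k` is the subset of states of `C` associated with
state `k` of `Cd` (so `H` is the inverse of `S`):
`S 1 = CLOS({1})`; `S` is injective on states; `Cd` has no ε-transitions; the token
of state `k` of `Cd` is `CLASS(S k)`; and the transition of state `k` on `σ` is `#`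
if the successor set is empty, and otherwise leads to the state associated with the
ε-closure of the successor set. -/
def IsDeterminization (C Cd : Classifier α T) (S : ℕ → Set ℤ) : Prop :=
  1 ≤ Cd.length ∧
  S 1 = Clos C {1} ∧
  (∀ i j, 1 ≤ i → i ≤ Cd.length → 1 ≤ j → j ≤ Cd.length → S i = S j → i = j) ∧
  (∀ i (h : i < Cd.length), (Cd.get ⟨i, h⟩).1 = ∅) ∧
  (∀ i (h : i < Cd.length), ClassOf C (S (i + 1)) (Cd.get ⟨i, h⟩).2.2) ∧
  (∀ i (h : i < Cd.length) (σ : α),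
    (NextSet C (S (i + 1)) σ = ∅ → (Cd.get ⟨i, h⟩).2.1.leVal σ = none) ∧
    (NextSet C (S (i + 1)) σ ≠ ∅ →
      ∃ k : ℕ, 1 ≤ k ∧ k ≤ Cd.length ∧ S k = Clos C (NextSet C (S (i + 1)) σ) ∧
        (Cd.get ⟨i, h⟩).2.1.leVal σ = some ((k : ℤ) - ((i : ℤ) + 1))))

end Classifier

/-! The states of `C` reachable on a word `w` form a set `reachSet C w` obeying the recursion of
the subset construction: it is `CLOS({1})` for `w = ε` and `CLOS(NextSet (reachSet C w) σ)` for
`w σ`. Since `C_det` has no ε-transitions, induction on `w` shows that `C_det` reaches on `w`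
exactly the state whose subset is `reachSet C w`, and reaches one precisely when that set is
nonempty; the token there is `CLASS(reachSet C w)`. Well-formedness makes the error token of
`C_det` equal to `t₁`. So on every prefix both classifiers see the same token of the largest
non-error state (or none), and a classification is determined by these data. -/

namespace Classifier

variable {α : Type*} [LinearOrder α] [OrderBot α] {T : Type*}

section General

variable {D : Classifier α T}

theorem TokOf.unique {i : ℤ} {t t' : T} (h : D.TokOf i t) (h' : D.TokOf i t') : t = t' := by
  obtain ⟨_, _, rfl⟩ := h
  obtain ⟨_, _, rfl⟩ := h'
  rfl

theorem SymStep.unique {σ : α} {a b b' : ℤ} (h : D.SymStep σ a b) (h' : D.SymStep σ a b') :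
    b = b' := by
  obtain ⟨_, _, hb⟩ := h
  obtain ⟨_, _, hb'⟩ := h'
  have := Option.some_injective _ (hb.symm.trans hb')
  omega

theorem tokOf_natCast_add_one {i : ℕ} (hi : i < D.length) :
    D.TokOf ((i : ℤ) + 1) (D.get ⟨i, hi⟩).2.2 :=
  ⟨by simpa using hi, by omega, by simp⟩

theorem symStep_natCast_add_one_iff {σ : α} {i : ℕ} (hi : i < D.length) {b : ℤ} :
    D.SymStep σ ((i : ℤ) + 1) b ↔
      (D.get ⟨i, hi⟩).2.1.leVal σ = some (b - ((i : ℤ) + 1)) := by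
  simp [SymStep, hi]

theorem Reach.trans_eps {i j : ℤ} {w : List α} (h : D.Reach i w)
    (hij : Relation.ReflTransGen (EpsStep D) i j) : D.Reach j w := by
  induction hij with
  | refl => exact h
  | tail _ hstep ih => exact ih.tail (Or.inl ⟨hstep, rfl⟩)

theorem Reach.append_singleton {σ : α} {i j : ℤ} {w : List α} (h : D.Reach i w)
    (hij : D.SymStep σ i j) : D.Reach j (w ++ [σ]) :=
  h.tail (Or.inr ⟨σ, hij, rfl⟩)

theorem Reach.eps_of_nil {i : ℤ} (h : D.Reach i []) :
    Relation.ReflTransGen (EpsStep D) 1 i := by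
  suffices ∀ x, Relation.ReflTransGen (Step D) (1, []) x → x.2 = [] →
      Relation.ReflTransGen (EpsStep D) 1 x.1 from this _ h rfl
  intro x hx
  induction hx with
  | refl => exact fun _ => .refl
  | tail _ hstep ih =>
    rcases hstep with ⟨heps, hw⟩ | ⟨_, _, hw⟩
    · exact fun hnil => (ih (hw.symm.trans hnil)).tail heps
    · simp [hw]

theorem Reach.exists_of_append_singleton {σ : α} {k : ℤ} {w : List α}
    (h : D.Reach k (w ++ [σ])) : ∃ i j, D.Reach i w ∧ D.SymStep σ i j ∧
      Relation.ReflTransGen (EpsStep D) j k := by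
  suffices ∀ x, Relation.ReflTransGen (Step D) (1, []) x → x.2 = w ++ [σ] →
      ∃ i j, D.Reach i w ∧ D.SymStep σ i j ∧ Relation.ReflTransGen (EpsStep D) j x.1 from
    this _ h rfl
  intro x hx
  induction hx with
  | refl => simp
  | @tail y z hy hstep ih =>
    rcases hstep with ⟨heps, hw⟩ | ⟨τ, hsym, hw⟩
    · intro hz
      obtain ⟨i, j, hi, hij, hj⟩ := ih (hw.symm.trans hz)
      exact ⟨i, j, hi, hij, hj.tail heps⟩
    · intro hz
      obtain ⟨hy2, hτ⟩ := List.append_inj' (hw.symm.trans hz) rfl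
      obtain rfl : τ = σ := by simpa using hτ
      exact ⟨y.1, z.1, hy2 ▸ hy, hsym, .refl⟩

def reachSet (D : Classifier α T) (w : List α) : Set ℤ := {i | D.Reach i w}

theorem reachSet_nil : D.reachSet [] = Clos D {1} := by
  ext i
  constructor
  · exact fun h => ⟨1, rfl, h.eps_of_nil⟩
  · rintro ⟨_, rfl, h⟩
    exact Reach.trans_eps .refl h

theorem reachSet_append_singleton (w : List α) (σ : α) :
    D.reachSet (w ++ [σ]) = Clos D (NextSet D (D.reachSet w) σ) := by
  ext k
  constructor
  · intro h
    obtain ⟨i, j, hi, hij, hj⟩ := Reach.exists_of_append_singleton h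
    exact ⟨j, ⟨i, hi, hij⟩, hj⟩
  · rintro ⟨j, ⟨i, hi, hij⟩, hj⟩
    exact (Reach.append_singleton hi hij).trans_eps hj

theorem ClassOf.eq_of_forall_eq {S : Set ℤ} {t t₁ : T} (h : D.ClassOf S t)
    (ht₁ : D.TokOf 1 t₁) (hall : ∀ i ti, i ∈ S → D.TokOf i ti → ti = t₁) :
    t = t₁ := by
  rcases h with ⟨_, h₁⟩ | ⟨i, hi, hti, hne, _⟩
  · exact h₁.unique ht₁
  · exact absurd (hall i t hi hti) (hne t₁ ht₁)

theorem ClassOf.eq_of_isGreatest {S : Set ℤ} {t t₁ ti : T} {i : ℤ} (h : D.ClassOf S t)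
    (ht₁ : D.TokOf 1 t₁) (hi : i ∈ S) (hti : D.TokOf i ti) (hne : ti ≠ t₁)
    (hmax : ∀ j tj, j ∈ S → D.TokOf j tj → tj ≠ t₁ → j ≤ i) : t = ti := by
  rcases h with ⟨hall, _⟩ | ⟨k, hk, htk, hnek, hmaxk⟩
  · exact absurd (hall i hi ti t₁ hti ht₁) hne
  · obtain rfl : k = i :=
      le_antisymm (hmax k t hk htk (hnek t₁ ht₁)) (hmaxk i hi ti t₁ hti ht₁ hne)
    exact htk.unique hti

theorem ClassifiesAs.length_le {w w' p : List α} {t tj t₁ : T} {j : ℤ}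
    (h : D.ClassifiesAs w w' t) (hp : p <+: w) (hj : D.Reach j p) (htj : D.TokOf j tj)
    (ht₁ : D.TokOf 1 t₁) (hne : tj ≠ t₁) : p.length ≤ w'.length := by
  rcases h with ⟨_, _, hall⟩ | ⟨_, _, _, _, _, _, _, _, hlonger⟩
  · exact absurd (hall p j tj t₁ hp hj htj ht₁) hne
  · by_contra hlt
    exact hne (hlonger p j tj t₁ hp (not_le.mp hlt) hj htj ht₁)

theorem ClassifiesAs.unique {w w' w'' : List α} {t' t'' : T} (h' : D.ClassifiesAs w w' t')
    (h'' : D.ClassifiesAs w w'' t'') : w' = w'' ∧ t' = t'' := by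
  rcases id h' with ⟨rfl, ht', hall'⟩ | ⟨hp', i, t₁, ht₁, hi, hti, hne', hmax', _⟩ <;>
    rcases id h'' with
      ⟨rfl, ht'', hall''⟩ | ⟨hp'', k, t₁', ht₁', hk, htk, hne'', hmax'', _⟩
  · exact ⟨rfl, ht'.unique ht''⟩
  · exact absurd (hall' w'' k t'' t₁' hp'' hk htk ht₁') hne''
  · exact absurd (hall'' w' i t' t₁ hp' hi hti ht₁) hne'
  · obtain rfl := ht₁'.unique ht₁
    have hlen : w'.length = w''.length :=
      le_antisymm (h''.length_le hp' hi hti ht₁ hne') (h'.length_le hp'' hk htk ht₁ hne'')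
    obtain rfl := (List.prefix_of_prefix_length_le hp' hp'' hlen.le).eq_of_length hlen
    obtain rfl : i = k := le_antisymm (hmax'' i t' hi hti hne') (hmax' k t'' hk htk hne'')
    exact ⟨rfl, hti.unique htk⟩

end General

namespace IsDeterminization

variable {C Cd : Classifier α T} {S : ℕ → Set ℤ}

theorem not_epsStep (hdet : IsDeterminization C Cd S) (a b : ℤ) : ¬ Cd.EpsStep a b := by
  obtain ⟨-, -, -, hnoEps, -⟩ := hdet
  rintro ⟨hlt, _, hmem⟩
  rw [hnoEps _ hlt] at hmem
  exact Finset.notMem_empty _ hmem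

theorem eq_of_reflTransGen_epsStep (hdet : IsDeterminization C Cd S) {a b : ℤ}
    (h : Relation.ReflTransGen (EpsStep Cd) a b) : a = b := by
  cases h.cases_tail with
  | inl h => exact h.symm
  | inr h => obtain ⟨c, _, hc⟩ := h; exact absurd hc (hdet.not_epsStep c b)

theorem exists_symStep (hdet : IsDeterminization C Cd S) {i : ℕ} (hi : i < Cd.length)
    {σ : α} (hne : (NextSet C (S (i + 1)) σ).Nonempty) :
    ∃ m < Cd.length, S (m + 1) = Clos C (NextSet C (S (i + 1)) σ) ∧
      Cd.SymStep σ ((i : ℤ) + 1) ((m : ℤ) + 1) := by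
  obtain ⟨-, -, -, -, -, htrans⟩ := hdet
  obtain ⟨k, hk₁, hk, hSk, hval⟩ := (htrans i hi σ).2 hne.ne_empty
  obtain ⟨m, rfl⟩ : ∃ m, k = m + 1 := ⟨k - 1, by omega⟩
  refine ⟨m, by omega, hSk, (symStep_natCast_add_one_iff hi).2 ?_⟩
  rw [hval]
  push_cast
  ring_nf

theorem exists_of_symStep (hdet : IsDeterminization C Cd S) {i : ℕ} (hi : i < Cd.length)
    {σ : α} {b : ℤ} (hs : Cd.SymStep σ ((i : ℤ) + 1) b) :
    ∃ m < Cd.length, b = (m : ℤ) + 1 ∧ S (m + 1) = Clos C (NextSet C (S (i + 1)) σ) := by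
  have hne : (NextSet C (S (i + 1)) σ).Nonempty := by
    rw [Set.nonempty_iff_ne_empty]
    intro hempty
    have hval := (symStep_natCast_add_one_iff hi).1 hs
    obtain ⟨-, -, -, -, -, htrans⟩ := id hdet
    rw [(htrans i hi σ).1 hempty] at hval
    exact Option.some_ne_none _ hval.symm
  obtain ⟨m, hm, hSm, hsm⟩ := hdet.exists_symStep hi hne
  exact ⟨m, hm, hs.unique hsm, hSm⟩

theorem exists_of_reach (hdet : IsDeterminization C Cd S) {k : ℤ} {w : List α}
    (h : Cd.Reach k w) : ∃ i < Cd.length, k = (i : ℤ) + 1 ∧ S (i + 1) = C.reachSet w := by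
  induction w using List.reverseRecOn generalizing k with
  | nil =>
    have := hdet.eq_of_reflTransGen_epsStep h.eps_of_nil
    exact ⟨0, hdet.1, by simpa using this.symm, by rw [hdet.2.1, reachSet_nil]⟩
  | append_singleton w σ ih =>
    obtain ⟨j, b, hj, hjb, hbk⟩ := h.exists_of_append_singleton
    obtain rfl := hdet.eq_of_reflTransGen_epsStep hbk
    obtain ⟨i, hi, rfl, hSi⟩ := ih hj
    obtain ⟨m, hm, rfl, hSm⟩ := hdet.exists_of_symStep hi hjb
    exact ⟨m, hm, rfl, by rw [hSm, hSi, reachSet_append_singleton]⟩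

theorem exists_reach (hdet : IsDeterminization C Cd S) {w : List α}
    (hw : (C.reachSet w).Nonempty) :
    ∃ i < Cd.length, S (i + 1) = C.reachSet w ∧ Cd.Reach ((i : ℤ) + 1) w := by
  induction w using List.reverseRecOn with
  | nil => exact ⟨0, hdet.1, by rw [hdet.2.1, reachSet_nil], by simpa using .refl⟩
  | append_singleton w σ ih =>
    rw [reachSet_append_singleton] at hw
    obtain ⟨_, b, ⟨a, ha, hab⟩, _⟩ := hw
    obtain ⟨i, hi, hSi, hreach⟩ := ih ⟨a, ha⟩
    obtain ⟨m, hm, hSm, hstep⟩ := hdet.exists_symStep hi ⟨b, a, hSi ▸ ha, hab⟩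
    exact ⟨m, hm, by rw [hSm, hSi, reachSet_append_singleton], hreach.append_singleton hstep⟩

theorem reach_unique (hdet : IsDeterminization C Cd S) {j k : ℤ} {w : List α}
    (hj : Cd.Reach j w) (hk : Cd.Reach k w) : j = k := by
  obtain ⟨i, hi, rfl, hSi⟩ := hdet.exists_of_reach hj
  obtain ⟨m, hm, rfl, hSm⟩ := hdet.exists_of_reach hk
  obtain ⟨-, -, hSinj, -⟩ := hdet
  have := hSinj (i + 1) (m + 1) (by omega) (by omega) (by omega) (by omega) (hSi.trans hSm.symm)
  omega

theorem exists_tokOf_classOf (hdet : IsDeterminization C Cd S) {k : ℤ} {w : List α}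
    (hk : Cd.Reach k w) : ∃ t, Cd.TokOf k t ∧ C.ClassOf (C.reachSet w) t := by
  obtain ⟨i, hi, rfl, hSi⟩ := hdet.exists_of_reach hk
  obtain ⟨-, -, -, -, htok, -⟩ := hdet
  exact ⟨_, tokOf_natCast_add_one hi, hSi ▸ htok i hi⟩

theorem tokOf_eq_of_forall_eq (hdet : IsDeterminization C Cd S) {t₁ tk : T} {k : ℤ}
    {w : List α} (ht₁ : C.TokOf 1 t₁)
    (hall : ∀ i ti, C.Reach i w → C.TokOf i ti → ti = t₁)
    (hk : Cd.Reach k w) (htk : Cd.TokOf k tk) : tk = t₁ := by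
  obtain ⟨t, ht, hcl⟩ := hdet.exists_tokOf_classOf hk
  rw [htk.unique ht]
  exact hcl.eq_of_forall_eq ht₁ hall

theorem tokOf_one (hdet : IsDeterminization C Cd S) (hwf : C.WellFormed) {t₁ : T}
    (ht₁ : C.TokOf 1 t₁) : Cd.TokOf 1 t₁ := by
  obtain ⟨t, ht, -⟩ := hdet.exists_tokOf_classOf (.refl : Cd.Reach 1 [])
  have herr := hdet.tokOf_eq_of_forall_eq ht₁
    (fun i ti hi hti => hwf i ti t₁ hi hti ht₁) .refl ht
  rwa [herr] at ht

theorem exists_reach_tokOf (hdet : IsDeterminization C Cd S) {t₁ ti : T} {i : ℤ}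
    {w : List α} (ht₁ : C.TokOf 1 t₁) (hi : C.Reach i w) (hti : C.TokOf i ti)
    (hne : ti ≠ t₁)
    (hmax : ∀ j tj, C.Reach j w → C.TokOf j tj → tj ≠ t₁ → j ≤ i) :
    ∃ k, Cd.Reach k w ∧ Cd.TokOf k ti := by
  obtain ⟨m, -, -, hk⟩ := hdet.exists_reach ⟨i, hi⟩
  obtain ⟨t, ht, hcl⟩ := hdet.exists_tokOf_classOf hk
  exact ⟨_, hk, hcl.eq_of_isGreatest ht₁ hi hti hne hmax ▸ ht⟩

theorem classifiesAs (hdet : IsDeterminization C Cd S) (hwf : C.WellFormed)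
    {w w' : List α} {t : T} (h : C.ClassifiesAs w w' t) : Cd.ClassifiesAs w w' t := by
  rcases h with ⟨rfl, ht, hall⟩ | ⟨hp, i, t₁, ht₁, hi, hti, hne, hmax, hlonger⟩
  · refine Or.inl ⟨rfl, hdet.tokOf_one hwf ht, fun p k tk t₁' hp hk htk ht₁' => ?_⟩
    rw [ht₁'.unique (hdet.tokOf_one hwf ht)]
    exact hdet.tokOf_eq_of_forall_eq ht (fun i ti hi hti => hall p i ti t hp hi hti ht) hk htk
  · obtain ⟨k, hk, htk⟩ := hdet.exists_reach_tokOf ht₁ hi hti hne hmax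
    refine Or.inr ⟨hp, k, t₁, hdet.tokOf_one hwf ht₁, hk, htk, hne,
      fun j _ hj _ _ => (hdet.reach_unique hj hk).le,
      fun p j tj t₁' hp hlen hj htj ht₁' => ?_⟩
    rw [ht₁'.unique (hdet.tokOf_one hwf ht₁)]
    exact hdet.tokOf_eq_of_forall_eq ht₁
      (fun i ti hi hti => hlonger p i ti t₁ hp hlen hi hti ht₁) hj htj

end IsDeterminization

end Classifier

theorem determinization_correct_general {α : Type*} [LinearOrder α] [OrderBot α] {T : Type*}
    (C Cd : Classifier α T) (S : ℕ → Set ℤ)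
    (hwf : Classifier.WellFormed C)
    (hdet : Classifier.IsDeterminization C Cd S)
    (w w' w'' : List α) (t' t'' : T)
    (h1 : Classifier.ClassifiesAs C w w' t')
    (h2 : Classifier.ClassifiesAs Cd w w'' t'') :
    w' = w'' ∧ t' = t'' :=
  (hdet.classifiesAs hwf h1).unique h2

/-- If `C` is well-formed and `C_det` is obtained from `C` by the
determinization procedure, then the two classifiers classify every word identically:
if `C` classifies `w` as `(w', t')` and `C_det` classifies `w` as `(w'', t'')`,
then `w' = w''` and `t' = t''`. -/
theorem determinization_correct {α : Type*} [LinearOrder α] [OrderBot α] {T : Type*}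
    (C Cd : Classifier α T) (S : ℕ → Set ℤ)
    (hC : C ≠ []) (hwf : Classifier.WellFormed C)
    (hdet : Classifier.IsDeterminization C Cd S)
    (w w' w'' : List α) (t' t'' : T)
    (h1 : Classifier.ClassifiesAs C w w' t')
    (h2 : Classifier.ClassifiesAs Cd w w'' t'') :
    w' = w'' ∧ t' = t'' :=
  determinization_correct_general C Cd S hwf hdet w w' w'' t' t'' h1 h2
end

section
/- Let C be a deterministic classifier and define the optimal reachability function ρ by: ρ(i)(t) is the minimal length n of a transition path from state i to a state j with t_j = t ≠ t₁ (undefined if no such path exists). Then the iterative procedure that initializes ρ(i) = {(tᵢ,0)} for states with tᵢ ≠ t₁ and ρ(i) = {} otherwise, and repeatedly relaxes along back-transitions (for i with a transition into u and (t,n) ∈ ρ(u), setting ρ(i)(t) := min(ρ(i)(t), n+1)) until no change occurs, terminates and computes exactly this optimal ρ. -/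
/-- A deterministic classifier: a flat list of states, each with a border function
giving relative symbol transitions (`none` = `#`) and a token class. State `1`
carries the error class `t₁`. -/
abbrev DetClassifier (α : Type*) [LinearOrder α] [OrderBot α] (T : Type*) :=
  List (BorderFun α (Option ℤ) × T)

namespace DetClassifier

variable {α : Type*} [LinearOrder α] [OrderBot α] {T : Type*}

/-- `i` is a state of `C` (1-indexed). -/
def IsState (C : DetClassifier α T) (i : ℤ) : Prop := 1 ≤ i ∧ i ≤ (C.length : ℤ)

/-- `TokOf C i t`: state `i` exists and carries token `t`. -/
def TokOf (C : DetClassifier α T) (i : ℤ) (t : T) : Prop :=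
  ∃ h : (i - 1).toNat < C.length, 1 ≤ i ∧ (C.get ⟨(i - 1).toNat, h⟩).2 = t

/-- The successor state of `i` on symbol `σ`: `i + φᵢ^≤(σ)` if `φᵢ^≤(σ) ≠ #`. -/
noncomputable def Next (C : DetClassifier α T) (i : ℤ) (σ : α) : Option ℤ :=
  if h : (i - 1).toNat < C.length ∧ 1 ≤ i then
    ((C.get ⟨(i - 1).toNat, h.1⟩).1.leVal σ).map (i + ·)
  else none

/-- The transition relation on configurations. -/
def Step (C : DetClassifier α T) : ℤ × List α → ℤ × List α → Prop := fun p q =>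
  ∃ σ, Next C p.1 σ = some q.1 ∧ q.2 = p.2 ++ [σ]

/-- `Reach C i w`: `(1, ε) ⊢* (i, w)`. -/
def Reach (C : DetClassifier α T) (i : ℤ) (w : List α) : Prop :=
  Relation.ReflTransGen (Step C) (1, []) (i, w)

/-- Classification of `w` as the pair `(w', t)`: `w'` is the maximal prefix of `w`
reaching a non-error state and `t` is its token; `(ε, t₁)` if there is none. -/
def ClassifiesAs (C : DetClassifier α T) (w w' : List α) (t : T) : Prop :=
  (w' = [] ∧ TokOf C 1 t ∧
    ∀ p i ti t1, p <+: w → Reach C i p → TokOf C i ti → TokOf C 1 t1 → ti = t1) ∨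
  (w' <+: w ∧ ∃ i t1, TokOf C 1 t1 ∧ Reach C i w' ∧ TokOf C i t ∧ t ≠ t1 ∧
    (∀ j tj, Reach C j w' → TokOf C j tj → tj ≠ t1 → j ≤ i) ∧
    (∀ p j tj t1', p <+: w → w'.length < p.length →
      Reach C j p → TokOf C j tj → TokOf C 1 t1' → tj = t1'))

/-- The lifting of a relation on states to `Option ℤ`, with `# ≡ #` and `#` not
equivalent to any state. -/
def OptRel (r : ℤ → ℤ → Prop) : Option ℤ → Option ℤ → Prop := fun a b =>
  (a = none ∧ b = none) ∨ ∃ x y, a = some x ∧ b = some y ∧ r x y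

/-- `r` is an equivalence relation on the states of `C` such that related states
carry the same token and have related successors on every symbol. -/
def Congruence (C : DetClassifier α T) (r : ℤ → ℤ → Prop) : Prop :=
  (∀ i, IsState C i → r i i) ∧
  (∀ i j, r i j → r j i) ∧
  (∀ i j k, r i j → r j k → r i k) ∧
  (∀ i j, r i j → IsState C i ∧ IsState C j) ∧
  (∀ i j, r i j → ∀ ti tj, TokOf C i ti → TokOf C j tj → ti = tj) ∧
  (∀ i j, r i j → ∀ σ, OptRel r (Next C i σ) (Next C j σ))

/-- `r` is the coarsest congruence on `C`. -/
def Coarsest (C : DetClassifier α T) (r : ℤ → ℤ → Prop) : Prop :=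
  Congruence C r ∧ ∀ r', Congruence C r' → ∀ i j, r' i j → r i j

/-- `Q` is the quotient classifier `C / r`: there is a map `f` sending each state of
`C` to the (index of the) representative of its class in `Q`, with state `1` in the
class represented by state `1`, identifying exactly `r`-related states, surjective
onto the states of `Q`, preserving tokens and commuting with transitions. -/
def IsQuotient (C Q : DetClassifier α T) (r : ℤ → ℤ → Prop) : Prop :=
  ∃ f : ℤ → ℤ,
    f 1 = 1 ∧
    (∀ i, IsState C i → IsState Q (f i)) ∧
    (∀ k, IsState Q k → ∃ i, IsState C i ∧ f i = k) ∧
    (∀ i j, IsState C i → IsState C j → (r i j ↔ f i = f j)) ∧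
    (∀ i t, IsState C i → (TokOf C i t ↔ TokOf Q (f i) t)) ∧
    (∀ i σ, IsState C i → Next Q (f i) σ = (Next C i σ).map f)

/-- `ReachInN C n i j`: there is a path of exactly `n` symbol transitions from `i` to `j`. -/
def ReachInN (C : DetClassifier α T) : ℕ → ℤ → ℤ → Prop
  | 0, i, j => i = j
  | n + 1, i, j => ∃ σ k, Next C i σ = some k ∧ ReachInN C n k j

end DetClassifier

namespace DetClassifier

variable {α : Type*} [LinearOrder α] [OrderBot α] {T : Type*}

/-- `ρ` is a possible result of the iterative reachability procedure: it contains the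
initialization `ρ(i) = {(tᵢ, 0)}` for non-error states, it is stable under relaxation
along back-transitions, and every recorded value is justified either by the
initialization or by a relaxation step. -/
def ProcResult (C : DetClassifier α T) (t₁ : T) (ρ : ℤ → T → Option ℕ) : Prop :=
  (∀ i t, TokOf C i t → t ≠ t₁ → ρ i t = some 0) ∧
  (∀ i σ k t n, Next C i σ = some k → ρ k t = some n →
    ∃ m, ρ i t = some m ∧ m ≤ n + 1) ∧
  (∀ i t n, ρ i t = some n →
    (n = 0 ∧ TokOf C i t ∧ t ≠ t₁) ∨
    (∃ σ k n', Next C i σ = some k ∧ ρ k t = some n' ∧ n = n' + 1))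

/-- `ρ` is the optimal reachability function: `ρ(i)(t) = n` iff `t ≠ t₁`, there is a
path of length `n` from `i` to a state carrying token `t`, and `n` is minimal. -/
def Optimal (C : DetClassifier α T) (t₁ : T) (ρ : ℤ → T → Option ℕ) : Prop :=
  ∀ i t n, ρ i t = some n ↔
    (t ≠ t₁ ∧ (∃ j, ReachInN C n i j ∧ TokOf C j t) ∧
      ∀ m, (∃ j, ReachInN C m i j ∧ TokOf C j t) → n ≤ m)

end DetClassifier

/-!
A result of the relaxation procedure is sound (every recorded value is witnessed by a path,
by induction on the value, following the justifying relaxation steps) and complete (every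
path of length `m` forces a recorded value `≤ m`, by induction on the path, using stability
under relaxation). Soundness plus completeness is exactly optimality. Conversely the optimal
function, built with `Nat.find`, is itself a result of the procedure, which gives termination.
-/

namespace DetClassifier

variable {α : Type*} [LinearOrder α] [OrderBot α] {T : Type*}
  {C : DetClassifier α T} {t₁ : T} {ρ : ℤ → T → Option ℕ}

def ReachesTokIn (C : DetClassifier α T) (n : ℕ) (i : ℤ) (t : T) : Prop :=
  ∃ j, ReachInN C n i j ∧ TokOf C j t

theorem reachesTokIn_zero_iff {i : ℤ} {t : T} : ReachesTokIn C 0 i t ↔ TokOf C i t :=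
  ⟨fun ⟨_, hij, hj⟩ => hij ▸ hj, fun hi => ⟨i, rfl, hi⟩⟩

theorem reachesTokIn_succ_iff {n : ℕ} {i : ℤ} {t : T} :
    ReachesTokIn C (n + 1) i t ↔ ∃ σ k, Next C i σ = some k ∧ ReachesTokIn C n k t :=
  ⟨fun ⟨j, ⟨σ, k, hik, hkj⟩, hj⟩ => ⟨σ, k, hik, j, hkj, hj⟩,
    fun ⟨σ, k, hik, j, hkj, hj⟩ => ⟨j, ⟨σ, k, hik, hkj⟩, hj⟩⟩

theorem optimal_iff :
    Optimal C t₁ ρ ↔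
      (∀ i t n, ρ i t = some n → t ≠ t₁ ∧ ReachesTokIn C n i t) ∧
      (∀ i t m, t ≠ t₁ → ReachesTokIn C m i t → ∃ n ≤ m, ρ i t = some n) := by
  constructor
  · intro hρ
    refine ⟨fun i t n h => ((hρ i t n).1 h).imp_right And.left, fun i t m ht hm => ?_⟩
    classical
    have hex : ∃ n, ReachesTokIn C n i t := ⟨m, hm⟩
    exact ⟨Nat.find hex, Nat.find_min' hex hm,
      (hρ i t _).2 ⟨ht, Nat.find_spec hex, fun _ => Nat.find_min' hex⟩⟩
  · rintro ⟨hsound, hcomplete⟩ i t n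
    constructor
    · intro h
      obtain ⟨ht, hn⟩ := hsound i t n h
      refine ⟨ht, hn, fun m hm => ?_⟩
      obtain ⟨n', hn'm, h'⟩ := hcomplete i t m ht hm
      exact (Option.some.inj (h.symm.trans h')).symm ▸ hn'm
    · rintro ⟨ht, hn, hmin⟩
      obtain ⟨n', hn'n, h'⟩ := hcomplete i t n ht hn
      rwa [le_antisymm hn'n (hmin n' (hsound i t n' h').2)] at h'

namespace ProcResult

theorem reachesTokIn (hρ : ProcResult C t₁ ρ) {i : ℤ} {t : T} {n : ℕ} (h : ρ i t = some n) :
    t ≠ t₁ ∧ ReachesTokIn C n i t := by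
  induction n generalizing i with
  | zero =>
    rcases hρ.2.2 i t 0 h with ⟨-, hi, ht⟩ | ⟨_, _, _, _, _, hcon⟩
    · exact ⟨ht, reachesTokIn_zero_iff.2 hi⟩
    · omega
  | succ n ih =>
    rcases hρ.2.2 i t (n + 1) h with ⟨hcon, -⟩ | ⟨σ, k, n', hik, hk, hn⟩
    · omega
    obtain rfl : n' = n := by omega
    obtain ⟨ht, hkt⟩ := ih hk
    exact ⟨ht, reachesTokIn_succ_iff.2 ⟨σ, k, hik, hkt⟩⟩

theorem exists_le_of_reachesTokIn (hρ : ProcResult C t₁ ρ) {i : ℤ} {t : T} {m : ℕ}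
    (ht : t ≠ t₁) (hm : ReachesTokIn C m i t) : ∃ n ≤ m, ρ i t = some n := by
  induction m generalizing i with
  | zero => exact ⟨0, le_rfl, hρ.1 i t (reachesTokIn_zero_iff.1 hm) ht⟩
  | succ m ih =>
    obtain ⟨σ, k, hik, hkt⟩ := reachesTokIn_succ_iff.1 hm
    obtain ⟨n, hnm, hk⟩ := ih hkt
    obtain ⟨n', h', hn'n⟩ := hρ.2.1 i σ k t n hik hk
    exact ⟨n', by omega, h'⟩

theorem optimal (hρ : ProcResult C t₁ ρ) : Optimal C t₁ ρ :=
  optimal_iff.2 ⟨fun _ _ _ => hρ.reachesTokIn, fun _ _ _ => hρ.exists_le_of_reachesTokIn⟩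

end ProcResult

theorem exists_optimal (C : DetClassifier α T) (t₁ : T) : ∃ ρ, Optimal C t₁ ρ := by
  classical
  refine ⟨fun i t => if h : t ≠ t₁ ∧ ∃ n, ReachesTokIn C n i t then some (Nat.find h.2)
    else none, optimal_iff.2 ⟨fun i t n h => ?_, fun i t m ht hm => ?_⟩⟩
  · split_ifs at h with hc
    obtain rfl := Option.some.inj h
    exact ⟨hc.1, Nat.find_spec hc.2⟩
  · have hc : t ≠ t₁ ∧ ∃ n, ReachesTokIn C n i t := ⟨ht, m, hm⟩
    exact ⟨Nat.find hc.2, Nat.find_min' hc.2 hm, dif_pos hc⟩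

theorem Optimal.procResult (hρ : Optimal C t₁ ρ) : ProcResult C t₁ ρ := by
  obtain ⟨hsound, hcomplete⟩ := optimal_iff.1 hρ
  have hrelax : ∀ i σ k t n, Next C i σ = some k → ρ k t = some n →
      ∃ m, ρ i t = some m ∧ m ≤ n + 1 := by
    intro i σ k t n hik hk
    obtain ⟨ht, hkt⟩ := hsound k t n hk
    obtain ⟨m, hm, h⟩ := hcomplete i t (n + 1) ht (reachesTokIn_succ_iff.2 ⟨σ, k, hik, hkt⟩)
    exact ⟨m, h, hm⟩
  refine ⟨fun i t hi ht => ?_, hrelax, fun i t n h => ?_⟩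
  · obtain ⟨n, hn, h⟩ := hcomplete i t 0 ht (reachesTokIn_zero_iff.2 hi)
    rwa [Nat.le_zero.1 hn] at h
  obtain ⟨ht, hn⟩ := hsound i t n h
  cases n with
  | zero => exact Or.inl ⟨rfl, reachesTokIn_zero_iff.1 hn, ht⟩
  | succ n =>
    obtain ⟨σ, k, hik, hkt⟩ := reachesTokIn_succ_iff.1 hn
    obtain ⟨n', hn'n, hk⟩ := hcomplete k t n ht hkt
    -- relaxing along `i → k` shows `ρ k t` cannot be shorter than `n`
    obtain ⟨m, h', hm⟩ := hrelax i σ k t n' hik hk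
    obtain rfl := Option.some.inj (h.symm.trans h')
    exact Or.inr ⟨σ, k, n', hik, hk, by omega⟩

end DetClassifier

theorem reachability_correct_general {α : Type*} [LinearOrder α] [OrderBot α] {T : Type*}
    (C : DetClassifier α T) (t₁ : T) :
    (∃ ρ : ℤ → T → Option ℕ, DetClassifier.ProcResult C t₁ ρ) ∧
    (∀ ρ : ℤ → T → Option ℕ, DetClassifier.ProcResult C t₁ ρ →
      DetClassifier.Optimal C t₁ ρ) :=
  ⟨(DetClassifier.exists_optimal C t₁).imp fun _ => DetClassifier.Optimal.procResult,
    fun _ => DetClassifier.ProcResult.optimal⟩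

/-- The iterative relaxation procedure terminates and computes exactly
the optimal reachability function: a result of the procedure exists, and every result
of the procedure is the optimal `ρ` (minimal path lengths to non-error tokens). -/
theorem reachability_correct {α : Type*} [LinearOrder α] [OrderBot α] {T : Type*}
    (C : DetClassifier α T) (t₁ : T) (h1 : DetClassifier.TokOf C 1 t₁) :
    (∃ ρ : ℤ → T → Option ℕ, DetClassifier.ProcResult C t₁ ρ) ∧
    (∀ ρ : ℤ → T → Option ℕ, DetClassifier.ProcResult C t₁ ρ →
      DetClassifier.Optimal C t₁ ρ) :=
  reachability_correct_general C t₁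
end
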